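/- arXiv:1808.09817 — 3 statements merged into one kernel-verified Lean document; each statement's English description precedes it below -/
import Mathlib

section
/- The vector field V_11 = z_1²∂_{z_1} + (z_1z_2 + λθ_1θ_2)∂_{z_2} + z_1θ_1∂_{θ_1} + 2z_1θ_2∂_{θ_2}, written in the chart U_0 of M = P²_ω(ΠO(−1)⊕ΠO(−2)), transforms under the coordinate change of Lemma 'Transition functions' into a vector field with polynomial (regular) coefficients in the chart U_1; in particular V_11 extends to a global section of the tangent sheaf over U_0 ∪ U_1. -/
/-- The even vector field
`V₁₁ = z₁²∂_{z₁} + (z₁z₂ + λθ₁θ₂)∂_{z₂} + z₁θ₁∂_{θ₁} + 2z₁θ₂∂_{θ₂}`,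
written in the chart `U₀` of `M = ℙ²_ω(ΠO(−1) ⊕ ΠO(−2))`, becomes, after
rewriting via the super chain rule in the chart `U₁` (with coordinates
`z = z₁₁`, `w = z₂₁`, `θ₁ = θ₁₁`, `θ₂ = θ₂₁`, related by `z₁₀ = 1/z`,
`z₂₀ = w/z + λθ₁θ₂/z²`, `θ₁₀ = θ₁/z`, `θ₂₀ = θ₂/z²`), a vector field whose
four coefficients are *regular*, i.e. lie in the subalgebra
`ℂ[z, w, θ₁, θ₂]` (no negative powers of `z`); hence `V₁₁` extends to a
global section of the tangent sheaf over `U₀ ∪ U₁`. -/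
theorem V11_regular_in_U1 {R : Type*} [Ring R] [Algebra ℂ R] (l : ℂ)
    (z zi w θ₁ θ₂ : R) (Dz Dw D1 D2 : R → R)
    (hz_c : ∀ r : R, z * r = r * z) (hzi_c : ∀ r : R, zi * r = r * zi)
    (hw_c : ∀ r : R, w * r = r * w)
    (hzzi : z * zi = 1) (hziz : zi * z = 1)
    (hθ₁ : θ₁ * θ₁ = 0) (hθ₂ : θ₂ * θ₂ = 0) (hθ : θ₁ * θ₂ = -(θ₂ * θ₁)) :
    -- the U₀-coordinates expressed in the chart U₁
    let z₁₀ := zi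
    let z₂₀ := w * zi + l • (θ₁ * θ₂ * (zi * zi))
    let θ₁₀ := θ₁ * zi
    let θ₂₀ := θ₂ * (zi * zi)
    -- the U₀ coordinate derivations expressed via the super chain rule
    let Ez₁₀ : R → R := fun r =>
      -(z * z) * Dz r + (-(z * w) + l • (θ₁ * θ₂)) * Dw r
        - z * θ₁ * D1 r - 2 * (z * θ₂) * D2 r
    let Ez₂₀ : R → R := fun r => z * Dw r
    let Eθ₁₀ : R → R := fun r => -(l • θ₂) * Dw r + z * D1 r
    let Eθ₂₀ : R → R := fun r => l • (z * θ₁) * Dw r + (z * z) * D2 r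
    -- the vector field V₁₁ written in the chart U₀
    let V₁₁ : R → R := fun r =>
      (z₁₀ * z₁₀) * Ez₁₀ r + (z₁₀ * z₂₀ + l • (θ₁₀ * θ₂₀)) * Ez₂₀ r
        + z₁₀ * θ₁₀ * Eθ₁₀ r + 2 * (z₁₀ * θ₂₀) * Eθ₂₀ r
    -- V₁₁ has regular (polynomial) coefficients in the chart U₁
    ∃ a b c d : R,
      a ∈ Algebra.adjoin ℂ ({z, w, θ₁, θ₂} : Set R) ∧
      b ∈ Algebra.adjoin ℂ ({z, w, θ₁, θ₂} : Set R) ∧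
      c ∈ Algebra.adjoin ℂ ({z, w, θ₁, θ₂} : Set R) ∧
      d ∈ Algebra.adjoin ℂ ({z, w, θ₁, θ₂} : Set R) ∧
      ∀ r : R, V₁₁ r = a * Dz r + b * Dw r + c * D1 r + d * D2 r := by
  intro z₁₀ z₂₀ θ₁₀ θ₂₀ Ez₁₀ Ez₂₀ Eθ₁₀ Eθ₂₀ V₁₁
  refine ⟨-1, 0, 0, 0, neg_mem (one_mem _), zero_mem _, zero_mem _, zero_mem _, ?_⟩
  -- commutation rewrite rules (associated forms)
  have hwz : w * z = z * w := (hz_c w).symm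
  have hwz' : ∀ x : R, w * (z * x) = z * (w * x) := fun x => by
    rw [← mul_assoc, hwz, mul_assoc]
  have hwzi : w * zi = zi * w := (hzi_c w).symm
  have hwzi' : ∀ x : R, w * (zi * x) = zi * (w * x) := fun x => by
    rw [← mul_assoc, hwzi, mul_assoc]
  have h1z : θ₁ * z = z * θ₁ := (hz_c θ₁).symm
  have h1z' : ∀ x : R, θ₁ * (z * x) = z * (θ₁ * x) := fun x => by
    rw [← mul_assoc, h1z, mul_assoc]
  have h1zi : θ₁ * zi = zi * θ₁ := (hzi_c θ₁).symm
  have h1zi' : ∀ x : R, θ₁ * (zi * x) = zi * (θ₁ * x) := fun x => by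
    rw [← mul_assoc, h1zi, mul_assoc]
  have h1w : θ₁ * w = w * θ₁ := (hw_c θ₁).symm
  have h1w' : ∀ x : R, θ₁ * (w * x) = w * (θ₁ * x) := fun x => by
    rw [← mul_assoc, h1w, mul_assoc]
  have h2z : θ₂ * z = z * θ₂ := (hz_c θ₂).symm
  have h2z' : ∀ x : R, θ₂ * (z * x) = z * (θ₂ * x) := fun x => by
    rw [← mul_assoc, h2z, mul_assoc]
  have h2zi : θ₂ * zi = zi * θ₂ := (hzi_c θ₂).symm
  have h2zi' : ∀ x : R, θ₂ * (zi * x) = zi * (θ₂ * x) := fun x => by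
    rw [← mul_assoc, h2zi, mul_assoc]
  have h2w : θ₂ * w = w * θ₂ := (hw_c θ₂).symm
  have h2w' : ∀ x : R, θ₂ * (w * x) = w * (θ₂ * x) := fun x => by
    rw [← mul_assoc, h2w, mul_assoc]
  have h21 : θ₂ * θ₁ = -(θ₁ * θ₂) := by rw [hθ, neg_neg]
  have h21' : ∀ x : R, θ₂ * (θ₁ * x) = -(θ₁ * (θ₂ * x)) := fun x => by
    rw [← mul_assoc, h21, neg_mul, mul_assoc]
  have h11' : ∀ x : R, θ₁ * (θ₁ * x) = 0 := fun x => by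
    rw [← mul_assoc, hθ₁, zero_mul]
  have h22' : ∀ x : R, θ₂ * (θ₂ * x) = 0 := fun x => by
    rw [← mul_assoc, hθ₂, zero_mul]
  have hzzi' : ∀ x : R, z * (zi * x) = x := fun x => by
    rw [← mul_assoc, hzzi, one_mul]
  have hziz' : ∀ x : R, zi * (z * x) = x := fun x => by
    rw [← mul_assoc, hziz, one_mul]
  intro r
  show (z₁₀ * z₁₀) * Ez₁₀ r + (z₁₀ * z₂₀ + l • (θ₁₀ * θ₂₀)) * Ez₂₀ r
        + z₁₀ * θ₁₀ * Eθ₁₀ r + 2 * (z₁₀ * θ₂₀) * Eθ₂₀ r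
      = -1 * Dz r + 0 * Dw r + 0 * D1 r + 0 * D2 r
  simp only [z₁₀, z₂₀, θ₁₀, θ₂₀, Ez₁₀, Ez₂₀, Eθ₁₀, Eθ₂₀]
  simp only [smul_mul_assoc, mul_smul_comm, smul_smul, smul_neg, neg_smul, smul_add, smul_sub,
    mul_add, add_mul, mul_sub, sub_mul, neg_mul, mul_neg, neg_neg,
    mul_one, one_mul, mul_zero, zero_mul, smul_zero, zero_add, add_zero,
    two_mul, mul_assoc,
    hzzi, hziz, hzzi', hziz',
    hwz, hwz', hwzi, hwzi',
    h1z, h1z', h1zi, h1zi', h1w, h1w',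
    h2z, h2z', h2zi, h2zi', h2w, h2w',
    h21, h21', h11', h22', hθ₁, hθ₂]
  abel
end

section
/- The odd global section Ξ_7 = z_1²∂_{θ_2} − λz_1θ_1∂_{z_2} of the tangent sheaf of M = P²_ω(ΠO(−1)⊕ΠO(−2)), given in chart U_0, is regular in chart U_1: under the coordinate change z_10 = 1/z_11, z_20 = z_21/z_11 + λθ_11θ_21/z_11², θ_10 = θ_11/z_11, θ_20 = θ_21/z_11², it transforms into a vector field with polynomial coefficients in (z_11, z_21, θ_11, θ_21). -/
/-- The odd global section `Ξ₇ = z₁²∂_{θ₂} − λz₁θ₁∂_{z₂}` of the tangent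
sheaf of `M = ℙ²_ω(ΠO(−1) ⊕ ΠO(−2))`, given in the chart `U₀`, is regular
in the chart `U₁`: under the coordinate change `z₁₀ = 1/z₁₁`,
`z₂₀ = z₂₁/z₁₁ + λθ₁₁θ₂₁/z₁₁²`, `θ₁₀ = θ₁₁/z₁₁`, `θ₂₀ = θ₂₁/z₁₁²` (super
chain rule), it transforms into a vector field with polynomial coefficients
in `(z₁₁, z₂₁, θ₁₁, θ₂₁)`, i.e. no negative powers of `z₁₁` appear.  Here
`z = z₁₁`, `w = z₂₁`, `θ₁ = θ₁₁`, `θ₂ = θ₂₁`. -/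
theorem Xi7_regular_in_U1 {R : Type*} [Ring R] [Algebra ℂ R] (l : ℂ)
    (z zi w θ₁ θ₂ : R) (Dz Dw D1 D2 : R → R)
    (hz_c : ∀ r : R, z * r = r * z) (hzi_c : ∀ r : R, zi * r = r * zi)
    (hw_c : ∀ r : R, w * r = r * w)
    (hzzi : z * zi = 1) (hziz : zi * z = 1)
    (hθ₁ : θ₁ * θ₁ = 0) (hθ₂ : θ₂ * θ₂ = 0) (hθ : θ₁ * θ₂ = -(θ₂ * θ₁)) :
    -- the U₀-coordinates expressed in the chart U₁
    let z₁₀ := zi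
    let z₂₀ := w * zi + l • (θ₁ * θ₂ * (zi * zi))
    let θ₁₀ := θ₁ * zi
    let θ₂₀ := θ₂ * (zi * zi)
    -- the U₀ coordinate derivations expressed via the super chain rule
    let Ez₁₀ : R → R := fun r =>
      -(z * z) * Dz r + (-(z * w) + l • (θ₁ * θ₂)) * Dw r
        - z * θ₁ * D1 r - 2 * (z * θ₂) * D2 r
    let Ez₂₀ : R → R := fun r => z * Dw r
    let Eθ₁₀ : R → R := fun r => -(l • θ₂) * Dw r + z * D1 r
    let Eθ₂₀ : R → R := fun r => l • (z * θ₁) * Dw r + (z * z) * D2 r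
    -- the odd vector field Ξ₇ = z₁₀²∂_{θ₂₀} − λz₁₀θ₁₀∂_{z₂₀} in the chart U₀
    let Ξ₇ : R → R := fun r =>
      (z₁₀ * z₁₀) * Eθ₂₀ r - l • (z₁₀ * θ₁₀) * Ez₂₀ r
    -- Ξ₇ has regular (polynomial) coefficients in the chart U₁
    ∃ a b c d : R,
      a ∈ Algebra.adjoin ℂ ({z, w, θ₁, θ₂} : Set R) ∧
      b ∈ Algebra.adjoin ℂ ({z, w, θ₁, θ₂} : Set R) ∧
      c ∈ Algebra.adjoin ℂ ({z, w, θ₁, θ₂} : Set R) ∧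
      d ∈ Algebra.adjoin ℂ ({z, w, θ₁, θ₂} : Set R) ∧
      ∀ r : R, Ξ₇ r = a * Dz r + b * Dw r + c * D1 r + d * D2 r := by
  intro z₁₀ z₂₀ θ₁₀ θ₂₀ Ez₁₀ Ez₂₀ Eθ₁₀ Eθ₂₀ Ξ₇
  refine ⟨0, 0, 0, 1, Subalgebra.zero_mem _, Subalgebra.zero_mem _,
    Subalgebra.zero_mem _, Subalgebra.one_mem _, ?_⟩
  intro r
  have h1 : zi * zi * (z * z) = 1 := by
    rw [mul_assoc, ← mul_assoc zi z, hziz, one_mul, hziz]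
  have h2 : zi * zi * (z * θ₁) = zi * θ₁ := by
    rw [mul_assoc, ← mul_assoc zi z, hziz, one_mul]
  have h3 : zi * (θ₁ * zi) * z = zi * θ₁ := by
    rw [mul_assoc, mul_assoc θ₁, hziz, mul_one]
  show (zi * zi) * (l • (z * θ₁) * Dw r + (z * z) * D2 r)
      - l • (zi * (θ₁ * zi)) * (z * Dw r)
      = 0 * Dz r + 0 * Dw r + 0 * D1 r + 1 * D2 r
  rw [mul_add, smul_mul_assoc l (z * θ₁) (Dw r), mul_smul_comm,
    ← mul_assoc (zi * zi) (z * θ₁) (Dw r), h2,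
    ← mul_assoc (zi * zi) (z * z) (D2 r), h1, one_mul,
    smul_mul_assoc l (zi * (θ₁ * zi)) (z * Dw r),
    ← mul_assoc (zi * (θ₁ * zi)) z (Dw r), h3]
  simp
end

section
/- In the supercommutative ring C[x_2^{±1}, x_3^{±1}, y_2^{±1}, y_3^{±1}][ξ_2, η_2, ξ_3, η_3] with the relations coming from the chart transitions of G(1|1; C^{2|2}), the Čech 2-cochain product of the transition functions g_12 = x_2⁻¹ (i.e. X_1/X_0), g_23 = x_2 (i.e. X_0/X_1), g_31 = 1 of the line bundle O(1,0) on the triple overlap U_1∩U_2∩U_3 satisfies g_12·g_23·g_31 = 1 + ξ_2η_2/(x_2y_2), when the g_ij are regarded as functions on G via the super big cell coordinates (using x_2x_3 = 1 + ξ_2η_2/(x_2y_2) from the chart transition U_2∩U_3). -/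
/-- The Čech cocycle obstruction on `G = G(1|1; ℂ^{2|2})`.  Work in a
supercommutative ring containing the chart-3 coordinates: even central
invertible `x₃, y₃` (inverses `x₃i, y₃i`) and odd `ξ₃, η₃`.  The chart
transition `U₂ ∩ U₃` defines `x₂ = x₃⁻¹ + ξ₃η₃x₃⁻²y₃⁻¹`,
`ξ₂ = −ξ₃x₃⁻¹y₃⁻¹`, `η₂ = −η₃x₃⁻¹y₃⁻¹`, `y₂ = y₃⁻¹ − ξ₃η₃x₃⁻¹y₃⁻²`.
Then `x₂` and `y₂` are invertible and the product of the lifted transition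
functions `g₁₂·g₂₃·g₃₁` of `O(1,0)` on the triple overlap, which reduces to
`x₂·x₃`, equals `1 + ξ₂η₂/(x₂y₂)` — a nontrivial Čech 2-cocycle obstructing
the lift of `O(1,0)` to `G`. -/
theorem cech_cocycle_obstruction {R : Type*} [Ring R]
    (x₃ x₃i y₃ y₃i ξ₃ η₃ : R)
    (hx_c : ∀ r : R, x₃ * r = r * x₃) (hxi_c : ∀ r : R, x₃i * r = r * x₃i)
    (hy_c : ∀ r : R, y₃ * r = r * y₃) (hyi_c : ∀ r : R, y₃i * r = r * y₃i)
    (hx : x₃ * x₃i = 1) (hx' : x₃i * x₃ = 1)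
    (hy : y₃ * y₃i = 1) (hy' : y₃i * y₃ = 1)
    (hξ : ξ₃ * ξ₃ = 0) (hη : η₃ * η₃ = 0) (hξη : ξ₃ * η₃ = -(η₃ * ξ₃)) :
    let x₂ := x₃i + ξ₃ * η₃ * (x₃i * x₃i * y₃i)
    let ξ₂ := -(ξ₃ * (x₃i * y₃i))
    let η₂ := -(η₃ * (x₃i * y₃i))
    let y₂ := y₃i - ξ₃ * η₃ * (x₃i * y₃i * y₃i)
    ∃ x₂i y₂i : R,
      (x₂ * x₂i = 1 ∧ x₂i * x₂ = 1) ∧ (y₂ * y₂i = 1 ∧ y₂i * y₂ = 1) ∧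
      x₂ * x₃ = 1 + ξ₂ * η₂ * (x₂i * y₂i) := by
  intro x₂ ξ₂ η₂ y₂
  have swap : ∀ (c v : R), (∀ r : R, c * r = r * c) → ∀ b : R, c * (v * b) = v * (c * b) := by
    intro c v h b; rw [← mul_assoc, h v, mul_assoc]
  have hηξ : η₃ * ξ₃ = -(ξ₃ * η₃) := by rw [hξη, neg_neg]
  have hηξ' : ∀ b : R, η₃ * (ξ₃ * b) = -(ξ₃ * (η₃ * b)) := by
    intro b; rw [← mul_assoc, hηξ, neg_mul, mul_assoc]
  have hξ' : ∀ b : R, ξ₃ * (ξ₃ * b) = 0 := by intro b; rw [← mul_assoc, hξ, zero_mul]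
  have hη' : ∀ b : R, η₃ * (η₃ * b) = 0 := by intro b; rw [← mul_assoc, hη, zero_mul]
  -- push centrals right past odd variables
  have s1 := swap x₃ ξ₃ hx_c; have s2 := swap x₃ η₃ hx_c
  have s3 := swap x₃i ξ₃ hxi_c; have s4 := swap x₃i η₃ hxi_c
  have s5 := swap y₃ ξ₃ hy_c; have s6 := swap y₃ η₃ hy_c
  have s7 := swap y₃i ξ₃ hyi_c; have s8 := swap y₃i η₃ hyi_c
  -- put x-centrals before y-centrals
  have t1 := swap y₃ x₃ hy_c; have t2 := swap y₃ x₃i hy_c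
  have t3 := swap y₃i x₃ hyi_c; have t4 := swap y₃i x₃i hyi_c
  have p1 : y₃ * x₃ = x₃ * y₃ := hy_c x₃
  have p2 : y₃ * x₃i = x₃i * y₃ := hy_c x₃i
  have p3 : y₃i * x₃ = x₃ * y₃i := hyi_c x₃
  have p4 : y₃i * x₃i = x₃i * y₃i := hyi_c x₃i
  -- cancellations
  have c1 : ∀ b : R, x₃ * (x₃i * b) = b := by intro b; rw [← mul_assoc, hx, one_mul]
  have c2 : ∀ b : R, x₃i * (x₃ * b) = b := by intro b; rw [← mul_assoc, hx', one_mul]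
  have c3 : ∀ b : R, y₃ * (y₃i * b) = b := by intro b; rw [← mul_assoc, hy, one_mul]
  have c4 : ∀ b : R, y₃i * (y₃ * b) = b := by intro b; rw [← mul_assoc, hy', one_mul]
  refine ⟨x₃ - ξ₃ * η₃ * y₃i, y₃ + ξ₃ * η₃ * x₃i, ⟨?_, ?_⟩, ⟨?_, ?_⟩, ?_⟩ <;>
  · show _ = _
    simp only [x₂, ξ₂, η₂, y₂, mul_add, add_mul, mul_sub, sub_mul, mul_neg, neg_mul,
      mul_assoc, s1, s2, s3, s4, s5, s6, s7, s8, t1, t2, t3, t4, p1, p2, p3, p4,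
      c1, c2, c3, c4, hx, hx', hy, hy', hξ', hη', hηξ', hξ, hη,
      mul_one, one_mul, mul_zero, zero_mul, neg_neg, neg_zero, add_zero, zero_add,
      sub_zero, zero_sub]
    try abel
end
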